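/- With the run-length decomposition of the directive word x_1x_2⋯ = y_1^{d_1}y_2^{d_2}⋯ (y_i ≠ y_{i+1}, d_i > 0) and g(m) = d_1+⋯+d_{m-1}+1, one has u_{g(m+1)} = (h_{g(m)-1})^{d_m} (h_{g(m-1)-1})^{d_{m-1}} ⋯ (h_0)^{d_1} = (\bar{h_0})^{d_1}(\bar{h_1})^{d_2}⋯(\bar{h_{g(m)-1}})^{d_m}. -/

import Mathlib

variable {A : Type*} [DecidableEq A]

/-- `psiW a` is the morphism with `ψ_a(a) = a` and `ψ_a(x) = ax` for `x ≠ a`. -/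
def psiW (a : A) (w : List A) : List A :=
  w.flatMap (fun b => if b = a then [a] else [a, b])

/-- `muW x n = ψ_{x 1} ∘ ⋯ ∘ ψ_{x n}`. -/
def muW (x : ℕ → A) : ℕ → List A → List A
  | 0 => id
  | n + 1 => fun w => muW x n (psiW (x (n + 1)) w)

/-- `hW x n = μ_n (x_{n+1})`. -/
def hW (x : ℕ → A) (n : ℕ) : List A := muW x n [x (n + 1)]

/-- `p` is the palindromic right-closure of `w`: the shortest palindrome having `w`
as a prefix. -/
def IsPalClosure (w p : List A) : Prop :=
  w <+: p ∧ p.reverse = p ∧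
    ∀ q : List A, w <+: q → q.reverse = q → p.length ≤ q.length

/-- The finite word `w` is a prefix of the infinite word `s`. -/
def PrefInf (w : List A) (s : ℕ → A) : Prop :=
  ∀ i : ℕ, ∀ h : i < w.length, w[i] = s i

/-- Number of occurrences (positions) of `w` as a factor of `v`. -/
def occ (w v : List A) : ℕ :=
  (List.range (v.length + 1)).countP
    (fun i => decide (i + w.length ≤ v.length ∧ (v.drop i).take w.length = w))

/-- `cat z k = z 1 ++ z 2 ++ ⋯ ++ z k`. -/
def cat (z : ℕ → List A) (k : ℕ) : List A := ((List.range' 1 k).map z).flatten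

/-- `z` is the Ziv-Lempel factorization of the infinite word `s`: each `z m` is
the shortest prefix of `z m · z (m+1) ⋯` occurring only once in `z 1 ⋯ z m`. -/
def IsZFact (s : ℕ → A) (z : ℕ → List A) : Prop :=
  ∀ m : ℕ, 1 ≤ m → z m ≠ [] ∧ PrefInf (cat z m) s ∧
    occ (z m) (cat z m) = 1 ∧
    ∀ p : List A, p <+: z m → p ≠ z m → 2 ≤ occ p (cat z m)

/-- `c` is the Crochemore factorization of the infinite word `s`: each `c m` is
either a fresh letter, or the longest prefix of `c m · c (m+1) ⋯` occurring
twice in `c 1 ⋯ c m`. -/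
def IsCFact (s : ℕ → A) (c : ℕ → List A) : Prop :=
  ∀ m : ℕ, 1 ≤ m → c m ≠ [] ∧ PrefInf (cat c m) s ∧
    ((∃ a : A, c m = [a] ∧ a ∉ cat c (m - 1)) ∨
      (2 ≤ occ (c m) (cat c m) ∧
        occ (c m ++ [s (cat c m).length]) (cat c m ++ [s (cat c m).length]) = 1))

/-! Justin's formula `Pal (a w) = ψ_a (Pal w) a` comes from the fact that palindromic closure
commutes with `ψ_a`: `(ψ_a(w) a c)⁺ = ψ_a((w c)⁺) a` for every letter `c`. For `c = a` this
holds because the palindromic suffixes of `ψ_a(w) a` are exactly the words `ψ_a(t) a` with `t`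
a palindromic suffix of `w`; for `c ≠ a` the closure of `ψ_a(w c)` already extends `ψ_a(w c) a`.
Iterating gives `Pal (w c) = μ_w(c) Pal(w)`, i.e. `u_{n+1} = h_{n-1} u_n`. Since `ψ_a(a) = a`,
`h_n` is constant while `x_{n+1}` stays in one run of the directive word, which yields the first
product; the second is its reversal, `u_{g(m+1)}` being a palindrome. -/

section Psi

variable (a : A)

theorem psiW_nil : psiW a [] = [] := rfl

theorem psiW_append (u v : List A) : psiW a (u ++ v) = psiW a u ++ psiW a v :=
  List.flatMap_append ..

theorem psiW_cons_self (w : List A) : psiW a (a :: w) = a :: psiW a w := by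
  simp [psiW]

theorem psiW_cons_of_ne {c : A} (hc : c ≠ a) (w : List A) :
    psiW a (c :: w) = a :: c :: psiW a w := by
  simp [psiW, hc]

theorem psiW_ne_cons_of_ne {c : A} (hc : c ≠ a) (w t : List A) : psiW a w ≠ c :: t := by
  rcases w with _ | ⟨e, w⟩
  · simp [psiW_nil]
  · by_cases he : e = a
    · subst he
      simp [psiW_cons_self, Ne.symm hc]
    · simp [psiW_cons_of_ne a he, Ne.symm hc]

@[simp]
theorem psiW_eq_nil_iff {w : List A} : psiW a w = [] ↔ w = [] := by
  cases w <;> simp [psiW]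
  split_ifs <;> simp

theorem psiW_suffix {s w : List A} (h : s <:+ w) : psiW a s <:+ psiW a w := by
  obtain ⟨r, rfl⟩ := h
  exact ⟨psiW a r, (psiW_append a r s).symm⟩

theorem cons_reverse_psiW (w : List A) :
    a :: (psiW a w).reverse = psiW a w.reverse ++ [a] := by
  induction w with
  | nil => rfl
  | cons c w ih =>
    rw [show c :: w = [c] ++ w from rfl, psiW_append, List.reverse_append, List.reverse_append,
      psiW_append, ← List.cons_append, ih, List.append_assoc, List.append_assoc]
    by_cases hc : c = a
    · subst hc
      simp [psiW_cons_self, psiW_nil]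
    · simp [psiW_cons_of_ne a hc, psiW_nil]

theorem psiW_injective : Function.Injective (psiW a) := by
  intro u
  induction u with
  | nil =>
    rintro (_ | ⟨e, v⟩) h
    · rfl
    · simp [psiW_nil] at h
  | cons c u ih =>
    rintro (_ | ⟨e, v⟩) h
    · simp [psiW_nil] at h
    by_cases hc : c = a <;> by_cases he : e = a
    · subst hc he
      simp only [psiW_cons_self, List.cons.injEq, true_and] at h
      rw [ih h]
    · subst hc
      rw [psiW_cons_self, psiW_cons_of_ne c he, List.cons.injEq] at h
      exact absurd h.2 (psiW_ne_cons_of_ne c he _ _)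
    · subst he
      rw [psiW_cons_self, psiW_cons_of_ne e hc, List.cons.injEq] at h
      exact absurd h.2.symm (psiW_ne_cons_of_ne e hc _ _)
    · simp only [psiW_cons_of_ne a hc, psiW_cons_of_ne a he, List.cons.injEq, true_and] at h
      rw [h.1, ih h.2]

theorem reverse_psiW_append_singleton_eq_iff (w : List A) :
    (psiW a w ++ [a]).reverse = psiW a w ++ [a] ↔ w.reverse = w := by
  rw [List.reverse_append, List.reverse_singleton, List.singleton_append, cons_reverse_psiW,
    List.append_cancel_right_eq, (psiW_injective a).eq_iff]

theorem exists_eq_append_singleton_of_psiW_eq {w p r : List A} {c : A} (hc : c ≠ a)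
    (h : psiW a w = p ++ c :: r) : ∃ p', p = p' ++ [a] := by
  induction w generalizing p with
  | nil => simp [psiW_nil] at h
  | cons e w ih =>
    rcases p with _ | ⟨b, p⟩
    · exact absurd h (psiW_ne_cons_of_ne a hc _ _)
    by_cases he : e = a
    · subst he
      rw [psiW_cons_self, List.cons_append, List.cons.injEq] at h
      obtain ⟨p', rfl⟩ := ih h.2
      exact ⟨b :: p', rfl⟩
    · rw [psiW_cons_of_ne a he, List.cons_append, List.cons.injEq] at h
      obtain ⟨rfl, h⟩ := h
      rcases p with _ | ⟨b', p⟩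
      · exact ⟨[], rfl⟩
      · rw [List.cons_append, List.cons.injEq] at h
        obtain ⟨p', rfl⟩ := ih h.2
        exact ⟨a :: b' :: p', rfl⟩

theorem exists_suffix_psiW_eq {w s : List A} (hs : s <:+ psiW a w) (ha : ∀ b ∈ s.head?, b = a) :
    ∃ t, t <:+ w ∧ s = psiW a t := by
  induction w with
  | nil => exact ⟨[], List.suffix_refl _, by simpa [psiW_nil] using hs⟩
  | cons e w ih =>
    by_cases he : e = a
    · subst he
      rw [psiW_cons_self, List.suffix_cons_iff] at hs
      rcases hs with rfl | hs
      · exact ⟨e :: w, List.suffix_refl _, (psiW_cons_self e w).symm⟩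
      · obtain ⟨t, ht, rfl⟩ := ih hs
        exact ⟨t, ht.trans (List.suffix_cons e w), rfl⟩
    · rw [psiW_cons_of_ne a he, List.suffix_cons_iff, List.suffix_cons_iff] at hs
      rcases hs with rfl | rfl | hs
      · exact ⟨e :: w, List.suffix_refl _, (psiW_cons_of_ne a he w).symm⟩
      · exact absurd (ha e rfl) he
      · obtain ⟨t, ht, rfl⟩ := ih hs
        exact ⟨t, ht.trans (List.suffix_cons e w), rfl⟩

end Psi

section PalClosure

def palSuffixStart (v : List A) : ℕ :=
  Nat.find (⟨v.length, by simp⟩ : ∃ k, (v.drop k).reverse = v.drop k)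

def palClosure (v : List A) : List A := v ++ (v.take (palSuffixStart v)).reverse

theorem reverse_drop_palSuffixStart (v : List A) :
    (v.drop (palSuffixStart v)).reverse = v.drop (palSuffixStart v) :=
  Nat.find_spec (⟨v.length, by simp⟩ : ∃ k, (v.drop k).reverse = v.drop k)

theorem palSuffixStart_le {v : List A} {j : ℕ} (h : (v.drop j).reverse = v.drop j) :
    palSuffixStart v ≤ j :=
  Nat.find_min' (⟨v.length, by simp⟩ : ∃ k, (v.drop k).reverse = v.drop k) h

theorem palSuffixStart_le_length (v : List A) : palSuffixStart v ≤ v.length :=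
  palSuffixStart_le (by simp)

theorem length_palClosure (v : List A) : (palClosure v).length = v.length + palSuffixStart v := by
  simp [palClosure, palSuffixStart_le_length]

theorem length_le_of_suffix_of_reverse_eq {s v : List A} (hs : s <:+ v) (hpal : s.reverse = s) :
    s.length ≤ (v.drop (palSuffixStart v)).length := by
  have hlen := hs.length_le
  rw [List.suffix_iff_eq_drop] at hs
  rw [hs] at hpal
  have := palSuffixStart_le hpal
  simp only [List.length_drop]
  omega

theorem palClosure_eq_of_longest_suffix {v p s : List A} (hv : v = p ++ s) (hs : s.reverse = s)
    (hmax : ∀ t, t <:+ v → t.reverse = t → t.length ≤ s.length) :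
    palClosure v = v ++ p.reverse := by
  have hstart : palSuffixStart v = p.length := by
    refine le_antisymm (palSuffixStart_le (by rwa [hv, List.drop_left])) ?_
    have := hmax _ (List.drop_suffix _ _) (reverse_drop_palSuffixStart v)
    have hlen : v.length = p.length + s.length := by rw [hv, List.length_append]
    rw [List.length_drop] at this
    omega
  rw [palClosure, hstart, hv, List.take_left]

theorem reverse_palClosure (v : List A) : (palClosure v).reverse = palClosure v := by
  have key : ∀ t s : List A, s.reverse = s →
      (t ++ s ++ t.reverse).reverse = t ++ s ++ t.reverse := fun t s hs => by simp [hs]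
  have := key (v.take (palSuffixStart v)) _ (reverse_drop_palSuffixStart v)
  rwa [List.take_append_drop] at this

theorem length_palClosure_le {v q : List A} (hvq : v <+: q) (hq : q.reverse = q) :
    (palClosure v).length ≤ q.length := by
  obtain ⟨r, rfl⟩ := hvq
  rw [List.reverse_append] at hq
  rw [length_palClosure, List.length_append]
  have := palSuffixStart_le_length v
  rcases List.append_eq_append_iff.mp hq with ⟨t, hv, hvr⟩ | ⟨t, hr, -⟩
  · have ht : t.reverse = t := by
      rw [hv, List.reverse_append, List.reverse_reverse] at hvr
      exact List.append_cancel_right hvr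
    have hts : t <:+ v := hv ▸ List.suffix_append _ _
    have := length_le_of_suffix_of_reverse_eq hts ht
    have hvlen := congrArg List.length hv
    rw [List.length_drop] at this
    rw [List.length_append, List.length_reverse] at hvlen
    omega
  · have hrlen := congrArg List.length hr
    rw [List.length_reverse, List.length_append] at hrlen
    omega

theorem isPalClosure_palClosure (v : List A) : IsPalClosure v (palClosure v) :=
  ⟨List.prefix_append _ _, reverse_palClosure v, fun _ => length_palClosure_le⟩

theorem eq_reverse_take_of_reverse_append_eq {α : Type*} {v r : List α}
    (h : (v ++ r).reverse = v ++ r) (hr : r.length ≤ v.length) :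
    r = (v.take r.length).reverse := by
  have hpre : r.reverse <+: v ++ r := by
    rw [← h, List.reverse_append]
    exact List.prefix_append _ _
  have := List.prefix_of_prefix_length_le hpre (List.prefix_append v r) (by simpa using hr)
  rw [List.prefix_iff_eq_take, List.length_reverse] at this
  rw [← this, List.reverse_reverse]

theorem IsPalClosure.eq_palClosure {v p : List A} (h : IsPalClosure v p) : p = palClosure v := by
  obtain ⟨⟨r, rfl⟩, hpal, hmin⟩ := h
  have hlen := le_antisymm (hmin _ (isPalClosure_palClosure v).1 (reverse_palClosure v))
    (length_palClosure_le (List.prefix_append v r) hpal)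
  rw [length_palClosure, List.length_append] at hlen
  have hr : r.length = palSuffixStart v := by omega
  have := palSuffixStart_le_length v
  rw [palClosure, ← hr, ← eq_reverse_take_of_reverse_append_eq hpal (by omega)]

theorem palClosure_singleton (c : A) : palClosure [c] = [c] := by
  rw [palClosure, Nat.le_zero.mp (palSuffixStart_le (by simp))]
  simp

theorem palClosure_append_singleton_of_prefix {v : List A} {c : A}
    (h : v ++ [c] <+: palClosure v) : palClosure (v ++ [c]) = palClosure v :=
  (IsPalClosure.eq_palClosure ⟨h, reverse_palClosure v, fun _ hq hqpal =>
    length_palClosure_le ((List.prefix_append v [c]).trans hq) hqpal⟩).symm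

end PalClosure

section Justin
variable (a : A)

omit [DecidableEq A] in
theorem forall_mem_head?_of_reverse_append_singleton_eq {t : List A}
    (h : (t ++ [a]).reverse = t ++ [a]) : ∀ b ∈ t.head?, b = a := by
  rcases t with _ | ⟨e, t⟩
  · simp
  · simp at h
    simp [h.1]

theorem palClosure_psiW_append_self (w : List A) :
    palClosure (psiW a w ++ [a]) = psiW a (palClosure w) ++ [a] := by
  set k := palSuffixStart w
  have hclosure : palClosure (psiW a w ++ [a]) =
      psiW a w ++ [a] ++ (psiW a (w.take k)).reverse := by
    apply palClosure_eq_of_longest_suffix (s := psiW a (w.drop k) ++ [a])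
    · rw [← List.append_assoc, ← psiW_append, List.take_append_drop]
    · exact (reverse_psiW_append_singleton_eq_iff a _).mpr (reverse_drop_palSuffixStart w)
    · intro t ht htpal
      rcases List.suffix_concat_iff.mp ht with rfl | ⟨t, rfl, ht'⟩
      · simp
      -- `t a` is a palindrome, so `t` starts with `a` and is the image of a suffix of `w`
      obtain ⟨t₀, ht₀, rfl⟩ :=
        exists_suffix_psiW_eq a ht' (forall_mem_head?_of_reverse_append_singleton_eq a htpal)
      have hlen := length_le_of_suffix_of_reverse_eq ht₀
        ((reverse_psiW_append_singleton_eq_iff a t₀).mp htpal)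
      have := (psiW_suffix a
        (List.suffix_of_suffix_length_le ht₀ (List.drop_suffix k w) hlen)).length_le
      simp only [List.length_append]
      omega
  rw [hclosure, palClosure, psiW_append, List.append_assoc, List.append_assoc,
    List.singleton_append, cons_reverse_psiW]

theorem palClosure_psiW_append_of_ne (w : List A) {b : A} (hb : b ≠ a) :
    palClosure (psiW a (w ++ [b])) = psiW a (palClosure (w ++ [b])) ++ [a] := by
  set v := psiW a (w ++ [b]) with hv_def
  suffices hpre : v ++ [a] <+: palClosure v by
    rw [← palClosure_append_singleton_of_prefix hpre, palClosure_psiW_append_self]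
  -- the longest palindromic suffix of `v` starts with `b ≠ a`, so an `a` precedes it
  set k := palSuffixStart v
  have hv : v = psiW a w ++ [a] ++ [b] := by
    rw [hv_def, psiW_append, psiW_cons_of_ne a hb, psiW_nil]; simp
  have hlen : 1 ≤ (v.drop k).length :=
    length_le_of_suffix_of_reverse_eq (show [b] <:+ v by rw [hv]; exact List.suffix_append _ _) rfl
  obtain ⟨t, ht⟩ : ∃ t, v.drop k = b :: t := by
    have hsuf : v.drop k <:+ psiW a w ++ [a] ++ [b] := by rw [← hv]; exact List.drop_suffix k v
    rcases List.suffix_concat_iff.mp hsuf with h | ⟨t, h, -⟩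
    · simp [h] at hlen
    · refine ⟨t.reverse, ?_⟩
      rw [← reverse_drop_palSuffixStart v, h]
      simp
  obtain ⟨p, hp⟩ := exists_eq_append_singleton_of_psiW_eq a hb
    (by rw [← ht, List.take_append_drop] : psiW a (w ++ [b]) = v.take k ++ b :: t)
  rw [palClosure, hp]
  exact ⟨p.reverse, by simp⟩

theorem palClosure_psiW_append_pair (c : A) (w : List A) :
    palClosure (psiW a w ++ [a, c]) = psiW a (palClosure (w ++ [c])) ++ [a] := by
  by_cases hc : c = a
  · subst hc
    rw [← palClosure_psiW_append_self, psiW_append, psiW_cons_self, psiW_nil, List.append_assoc]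
    rfl
  · rw [← palClosure_psiW_append_of_ne a w hc, psiW_append, psiW_cons_of_ne a hc, psiW_nil]

end Justin

section IterPalClosure

def iterPalClosure (w : List A) : List A := w.foldl (fun p c => palClosure (p ++ [c])) []

theorem iterPalClosure_append_singleton (w : List A) (c : A) :
    iterPalClosure (w ++ [c]) = palClosure (iterPalClosure w ++ [c]) :=
  List.foldl_append

theorem iterPalClosure_cons (a : A) (w : List A) :
    iterPalClosure (a :: w) = psiW a (iterPalClosure w) ++ [a] := by
  induction w using List.reverseRecOn with
  | nil => exact palClosure_singleton a
  | append_singleton w c ih =>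
    rw [← List.cons_append, iterPalClosure_append_singleton, ih, iterPalClosure_append_singleton,
      List.append_assoc, List.singleton_append, palClosure_psiW_append_pair]

theorem iterPalClosure_append_singleton_eq_foldr (w : List A) (c : A) :
    iterPalClosure (w ++ [c]) = w.foldr psiW [c] ++ iterPalClosure w := by
  induction w with
  | nil => exact palClosure_singleton c
  | cons b w ih =>
    rw [List.cons_append, iterPalClosure_cons, ih, psiW_append, iterPalClosure_cons,
      List.foldr_cons, List.append_assoc]

end IterPalClosure

theorem muW_eq_foldr (x : ℕ → A) (n : ℕ) (w : List A) :
    muW x n w = ((List.range' 1 n).map x).foldr psiW w := by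
  induction n generalizing w with
  | zero => rfl
  | succ n ih =>
    show muW x n (psiW (x (n + 1)) w) = _
    rw [ih, List.range'_concat, List.map_append, List.foldr_append, Nat.one_mul, Nat.add_comm]
    rfl

theorem hW_succ_of_eq (x : ℕ → A) {n : ℕ} (h : x (n + 2) = x (n + 1)) :
    hW x (n + 1) = hW x n := by
  show muW x n (psiW (x (n + 1)) [x (n + 2)]) = muW x n [x (n + 1)]
  rw [h, psiW_cons_self, psiW_nil]

theorem hW_add_eq_of_forall_eq (x : ℕ → A) {n k : ℕ}
    (h : ∀ i ≤ k, x (n + 1 + i) = x (n + 1)) :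
    hW x (n + k) = hW x n := by
  induction k with
  | zero => rfl
  | succ k ih =>
    rw [← Nat.add_assoc, hW_succ_of_eq x, ih fun i hi => h i (by omega)]
    rw [show n + k + 2 = n + 1 + (k + 1) by omega, show n + k + 1 = n + 1 + k by omega,
      h _ le_rfl, h k (by omega)]

section Runs
variable {α : Type*} {v h : ℕ → List α}

theorem eq_flatten_replicate_append_of_const (hv : ∀ n, v (n + 1) = h n ++ v n) {N k : ℕ}
    (hconst : ∀ j < k, h (N + j) = h N) :
    v (N + k) = (List.replicate k (h N)).flatten ++ v N := by
  induction k with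
  | zero => simp
  | succ k ih =>
    rw [← Nat.add_assoc, hv, ih (fun j hj => hconst j (by omega)), hconst k (by omega),
      List.replicate_succ, List.flatten_cons, List.append_assoc]

theorem eq_flatten_runs (hv : ∀ n, v (n + 1) = h n ++ v n) {d G : ℕ → ℕ}
    (hG : ∀ m, 1 ≤ m → G (m + 1) = G m + d m)
    (hrun : ∀ m, 1 ≤ m → ∀ j < d m, h (G m + j) = h (G m)) (m : ℕ) :
    v (G (m + 1)) = ((List.range' 1 m).reverse.map
      fun i => (List.replicate (d i) (h (G i))).flatten).flatten ++ v (G 1) := by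
  induction m with
  | zero => simp
  | succ m ih =>
    rw [hG (m + 1) (by omega), eq_flatten_replicate_append_of_const hv (hrun (m + 1) (by omega)),
      ih, List.range'_concat, List.reverse_append]
    simp [Nat.add_comm]

theorem reverse_flatten_map_reverse_flatten_replicate {β : Type*} (l : List β) (d : β → ℕ)
    (f : β → List α) :
    ((l.reverse.map fun i => (List.replicate (d i) (f i)).flatten).flatten).reverse =
      (l.map fun i => (List.replicate (d i) (f i).reverse).flatten).flatten := by
  simp [List.reverse_flatten, List.map_reverse, Function.comp_def]

end Runs

section DirectiveWord
variable {x : ℕ → A} {u : ℕ → List A}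

theorem eq_iterPalClosure_of_isPalClosure (hu1 : u 1 = [])
    (hu : ∀ n, 1 ≤ n → IsPalClosure (u n ++ [x n]) (u (n + 1))) (n : ℕ) :
    u (n + 1) = iterPalClosure ((List.range' 1 n).map x) := by
  induction n with
  | zero => exact hu1
  | succ n ih =>
    rw [(hu (n + 1) (by omega)).eq_palClosure, ih, ← iterPalClosure_append_singleton,
      List.range'_concat, List.map_append, List.map_singleton, Nat.one_mul, Nat.add_comm]

theorem eq_hW_append_of_isPalClosure (hu1 : u 1 = [])
    (hu : ∀ n, 1 ≤ n → IsPalClosure (u n ++ [x n]) (u (n + 1))) (n : ℕ) :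
    u (n + 2) = hW x n ++ u (n + 1) := by
  rw [eq_iterPalClosure_of_isPalClosure hu1 hu, eq_iterPalClosure_of_isPalClosure hu1 hu,
    List.range'_concat, List.map_append, List.map_singleton,
    iterPalClosure_append_singleton_eq_foldr, hW, muW_eq_foldr, Nat.one_mul, Nat.add_comm]

end DirectiveWord

theorem u_g_prod_general (x : ℕ → A) (u : ℕ → List A) (hu1 : u 1 = [])
    (hu : ∀ n : ℕ, 1 ≤ n → IsPalClosure (u n ++ [x n]) (u (n + 1))) (y : ℕ → A) (d : ℕ → ℕ) (g : ℕ → ℕ)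
    (hg : ∀ m : ℕ, g m = (∑ i ∈ Finset.Icc 1 (m - 1), d i) + 1)
    (hx : ∀ m : ℕ, 1 ≤ m → ∀ n : ℕ, g m ≤ n → n < g (m + 1) → x n = y m) :
    ∀ m : ℕ, 1 ≤ m →
      u (g (m + 1)) =
        ((List.range' 1 m).reverse.map
          (fun i => (List.replicate (d i) (hW x (g i - 1))).flatten)).flatten ∧
      u (g (m + 1)) =
        ((List.range' 1 m).map
          (fun i => (List.replicate (d i) (hW x (g i - 1)).reverse).flatten)).flatten := by
  have hg_pos : ∀ m, 1 ≤ g m := fun m => by rw [hg]; omega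
  have hg_succ : ∀ m, 1 ≤ m → g (m + 1) = g m + d m := by
    intro m hm
    obtain ⟨k, rfl⟩ : ∃ k, m = k + 1 := ⟨m - 1, by omega⟩
    rw [hg, hg, Nat.add_sub_cancel, Nat.add_sub_cancel, Finset.sum_Icc_succ_top (by omega)]
    omega
  have hrun : ∀ m, 1 ≤ m → ∀ j < d m, hW x (g m - 1 + j) = hW x (g m - 1) := by
    intro m hm j hj
    have := hg_pos m
    have := hg_succ m hm
    refine hW_add_eq_of_forall_eq x fun i hi => ?_
    rw [hx m hm _ (by omega) (by omega), hx m hm _ (by omega) (by omega)]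
  have hprod := eq_flatten_runs (v := fun n => u (n + 1)) (G := fun m => g m - 1)
    (eq_hW_append_of_isPalClosure hu1 hu)
    (fun m hm => by have := hg_pos m; rw [hg_succ m hm]; omega) hrun
  have hpal : ∀ n, (u (n + 1)).reverse = u (n + 1)
    | 0 => by rw [hu1]; rfl
    | n + 1 => (hu (n + 1) (by omega)).2.1
  intro m _
  have hformula := hprod m
  have hg1 : g 1 = 1 := by simp [hg]
  simp only [Nat.sub_add_cancel (hg_pos _), hg1, hu1, List.append_nil] at hformula
  refine ⟨hformula, ?_⟩
  rw [← reverse_flatten_map_reverse_flatten_replicate, ← hformula,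
    ← Nat.sub_add_cancel (hg_pos (m + 1)), hpal]

theorem u_g_prod (x : ℕ → A) (u : ℕ → List A) (hu1 : u 1 = [])
    (hu : ∀ n : ℕ, 1 ≤ n → IsPalClosure (u n ++ [x n]) (u (n + 1))) (y : ℕ → A) (d : ℕ → ℕ) (g : ℕ → ℕ)
    (hy : ∀ m : ℕ, 1 ≤ m → y m ≠ y (m + 1)) (hd : ∀ m : ℕ, 1 ≤ m → 0 < d m)
    (hg : ∀ m : ℕ, g m = (∑ i ∈ Finset.Icc 1 (m - 1), d i) + 1)
    (hx : ∀ m : ℕ, 1 ≤ m → ∀ n : ℕ, g m ≤ n → n < g (m + 1) → x n = y m) :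
    ∀ m : ℕ, 1 ≤ m →
      u (g (m + 1)) =
        ((List.range' 1 m).reverse.map
          (fun i => (List.replicate (d i) (hW x (g i - 1))).flatten)).flatten ∧
      u (g (m + 1)) =
        ((List.range' 1 m).map
          (fun i => (List.replicate (d i) (hW x (g i - 1)).reverse).flatten)).flatten :=
  u_g_prod_general x u hu1 hu y d g hg hx
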